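/- Let f : [0,1] → ℝ≥0 be continuous and C ≥ 0 satisfy f(s₁) ≤ f(s₂) + C∫_{s₁}^{s₂} s^{-1/2} f(s) ds for all 0 ≤ s₁ ≤ s₂ ≤ 1. Then f(s) ≤ e^{2C} f(1) for all s ∈ [0,1]. -/
import Mathlib

open MeasureTheory intervalIntegral Set Real


/-- Gronwall inequality with the integrable singular weight `s^{-1/2}`:
if `f : [0,1] → ℝ≥0` is continuous, `C ≥ 0`, and
`f(s₁) ≤ f(s₂) + C ∫_{s₁}^{s₂} s^{-1/2} f(s) ds` for all `0 ≤ s₁ ≤ s₂ ≤ 1`,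
then `f(s) ≤ e^{2C} f(1)` for all `s ∈ [0,1]`. -/
theorem gronwall_singular_weight
    (f : ℝ → ℝ) (C : ℝ) (hC : 0 ≤ C)
    (hcont : ContinuousOn f (Set.Icc 0 1))
    (hpos : ∀ s ∈ Set.Icc (0:ℝ) 1, 0 ≤ f s)
    (hineq : ∀ s₁ s₂ : ℝ, 0 ≤ s₁ → s₁ ≤ s₂ → s₂ ≤ 1 →
      f s₁ ≤ f s₂ + C * ∫ s in s₁..s₂, s ^ (-(1:ℝ)/2) * f s) :
    ∀ s ∈ Set.Icc (0:ℝ) 1, f s ≤ Real.exp (2 * C) * f 1 := by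
  set w : ℝ → ℝ := fun t => t ^ (-(1:ℝ)/2) * f t with hwdef
  -- integrability of w on subintervals of [0,1]
  have hwint : ∀ a b : ℝ, 0 ≤ a → b ≤ 1 → a ≤ b → IntervalIntegrable w volume a b := by
    intro a b ha hb hab
    have h1 : IntervalIntegrable (fun t : ℝ => t ^ (-(1:ℝ)/2)) volume a b :=
      intervalIntegral.intervalIntegrable_rpow' (by norm_num)
    refine h1.mul_continuousOn (hcont.mono ?_)
    rw [Set.uIcc_of_le hab]
    exact Set.Icc_subset_Icc ha hb
  have hw01 : IntervalIntegrable w volume 0 1 := hwint 0 1 le_rfl le_rfl zero_le_one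
  set g : ℝ → ℝ := fun s => ∫ t in s..1, w t with hgdef
  -- continuity of g on [0,1]
  have hgcont : ContinuousOn g (Set.Icc 0 1) := by
    have hint : IntegrableOn w (Set.uIcc 0 1) volume := by
      rw [Set.uIcc_of_le zero_le_one, integrableOn_Icc_iff_integrableOn_Ioc]
      exact hw01.1
    have h := intervalIntegral.continuousOn_primitive_interval_left hint
    rwa [Set.uIcc_of_le zero_le_one] at h
  -- derivative of g inside
  have hgderiv : ∀ s ∈ Set.Ioo (0:ℝ) 1, HasDerivAt g (-(w s)) s := by
    intro s hs
    have hwc : ContinuousAt w s := by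
      have h1 : ContinuousAt (fun t : ℝ => t ^ (-(1:ℝ)/2)) s :=
        Real.continuousAt_rpow_const s _ (Or.inl (ne_of_gt hs.1))
      have h2 : ContinuousAt f s :=
        hcont.continuousAt (Icc_mem_nhds hs.1 hs.2)
      exact h1.mul h2
    have hmeas : StronglyMeasurableAtFilter w (nhds s) := by
      refine ContinuousOn.stronglyMeasurableAtFilter isOpen_Ioo ?_ s hs
      intro x hx
      have h1 : ContinuousAt (fun t : ℝ => t ^ (-(1:ℝ)/2)) x :=
        Real.continuousAt_rpow_const x _ (Or.inl (ne_of_gt hx.1))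
      have h2 : ContinuousAt f x := hcont.continuousAt (Icc_mem_nhds hx.1 hx.2)
      exact (h1.mul h2).continuousWithinAt
    have hint : IntervalIntegrable w volume 1 s :=
      (hwint s 1 hs.1.le le_rfl hs.2.le).symm
    have h := intervalIntegral.integral_hasDerivAt_right hint hmeas hwc
    have hg' : g = fun u => -∫ t in (1:ℝ)..u, w t := by
      funext u
      rw [hgdef, intervalIntegral.integral_symm]
      simp [neg_neg]
    rw [hg']
    exact h.neg
  -- the comparison function
  set F : ℝ → ℝ := fun s => (f 1 + C * g s) * Real.exp (2 * C * Real.sqrt s) with hFdef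
  have hFcont : ContinuousOn F (Set.Icc 0 1) := by
    refine (continuousOn_const.add (continuousOn_const.mul hgcont)).mul ?_
    exact (Real.continuous_exp.comp (continuous_const.mul Real.continuous_sqrt)).continuousOn
  have hFderiv : ∀ s ∈ Set.Ioo (0:ℝ) 1, HasDerivAt F
      ((C * -(w s)) * Real.exp (2 * C * Real.sqrt s)
        + (f 1 + C * g s) * (Real.exp (2 * C * Real.sqrt s) * (2 * C * (1 / (2 * Real.sqrt s))))) s := by
    intro s hs
    have h1 : HasDerivAt (fun u => f 1 + C * g u) (C * -(w s)) s :=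
      ((hgderiv s hs).const_mul C).const_add (f 1)
    have hsq : HasDerivAt (fun u : ℝ => 2 * C * Real.sqrt u) (2 * C * (1 / (2 * Real.sqrt s))) s :=
      (Real.hasDerivAt_sqrt (ne_of_gt hs.1)).const_mul (2 * C)
    have h2 : HasDerivAt (fun u => Real.exp (2 * C * Real.sqrt u))
        (Real.exp (2 * C * Real.sqrt s) * (2 * C * (1 / (2 * Real.sqrt s)))) s := hsq.exp
    exact h1.mul h2
  -- nonnegativity of the derivative
  have hFd_nonneg : ∀ s ∈ Set.Ioo (0:ℝ) 1,
      0 ≤ (C * -(w s)) * Real.exp (2 * C * Real.sqrt s)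
        + (f 1 + C * g s) * (Real.exp (2 * C * Real.sqrt s) * (2 * C * (1 / (2 * Real.sqrt s)))) := by
    intro s hs
    have hsqpos : 0 < Real.sqrt s := Real.sqrt_pos.2 hs.1
    have hws : w s = (Real.sqrt s)⁻¹ * f s := by
      have : s ^ (-(1:ℝ)/2) = (Real.sqrt s)⁻¹ := by
        rw [Real.sqrt_eq_rpow, ← Real.rpow_neg hs.1.le]
        norm_num
      simp only [hwdef, this]
    have hfle : f s ≤ f 1 + C * g s := hineq s 1 hs.1.le hs.2.le le_rfl
    have key : (C * -(w s)) * Real.exp (2 * C * Real.sqrt s)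
        + (f 1 + C * g s) * (Real.exp (2 * C * Real.sqrt s) * (2 * C * (1 / (2 * Real.sqrt s))))
        = (C * (Real.sqrt s)⁻¹ * Real.exp (2 * C * Real.sqrt s)) * ((f 1 + C * g s) - f s) := by
      rw [hws]; field_simp; ring
    rw [key]
    have h1 : 0 ≤ C * (Real.sqrt s)⁻¹ * Real.exp (2 * C * Real.sqrt s) := by positivity
    exact mul_nonneg h1 (sub_nonneg.2 hfle)
  -- F is monotone on [0,1]
  have hFmono : MonotoneOn F (Set.Icc 0 1) := by
    refine monotoneOn_of_deriv_nonneg (convex_Icc 0 1) hFcont ?_ ?_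
    · rw [interior_Icc]
      exact fun x hx => ((hFderiv x hx).differentiableAt).differentiableWithinAt
    · rw [interior_Icc]
      intro x hx
      rw [(hFderiv x hx).deriv]
      exact hFd_nonneg x hx
  -- conclude
  intro s hs
  have hfle : f s ≤ f 1 + C * g s := hineq s 1 hs.1 hs.2 le_rfl
  have hF1 : F 1 = f 1 * Real.exp (2 * C) := by
    simp [hFdef, hgdef, intervalIntegral.integral_same, Real.sqrt_one]
  have hFs : F s ≤ F 1 := hFmono hs (by constructor <;> norm_num) hs.2
  have hexp1 : 1 ≤ Real.exp (2 * C * Real.sqrt s) := by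
    rw [Real.one_le_exp_iff]
    positivity
  have hA : 0 ≤ f 1 + C * g s := le_trans (hpos s hs) hfle
  have h2 : f 1 + C * g s ≤ f 1 * Real.exp (2 * C) := by
    calc f 1 + C * g s ≤ (f 1 + C * g s) * Real.exp (2 * C * Real.sqrt s) :=
          le_mul_of_one_le_right hA hexp1
      _ = F s := rfl
      _ ≤ F 1 := hFs
      _ = f 1 * Real.exp (2 * C) := hF1
  calc f s ≤ f 1 + C * g s := hfle
    _ ≤ f 1 * Real.exp (2 * C) := h2
    _ = Real.exp (2 * C) * f 1 := mul_comm _ _
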